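/- arXiv:2003.04971 — 2 statements merged into one kernel-verified Lean document; each statement's English description precedes it below -/
import Mathlib

section
/- Let h : ℝⁿ → ℝ and g : ℝⁿ → ℝ be continuously differentiable with g and ∇g bounded, and let ψ ∈ C¹_c(ℝ^{n+1}; ℝ^{n+1}). Then ∫_{ℝⁿ} [ ∂_y ψ(x, h(x))ᵀ (−∇h(x), 1) · g(x) + ψ(x, h(x))ᵀ (−∇g(x), 0) ] dx = ∫_{ℝⁿ} div(ψ)(x, h(x)) · g(x) dx, where ∂_y ψ denotes the partial derivative of ψ with respect to the last coordinate of ℝ^{n+1}. -/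
/-!
Put `U x = (ψ (x, h x)).1`. By the chain rule its divergence on `ℝⁿ` is
`∑ᵢ ∂ᵢψᵢ(x, h x) + ⟪∇h x, (∂_y ψ (x, h x)).1⟫`, so by the product rule the integrand on the
left equals `div ψ (x, h x) * g x - div (g • U) x`. The field `g • U` is `C¹` and vanishes
outside the projection of `tsupport ψ`, hence the integral of its divergence is zero.
-/

open MeasureTheory
open scoped RealInnerProductSpace

theorem HasCompactSupport.comp_graph {X Y M : Type*} [TopologicalSpace X] [T2Space X]
    [TopologicalSpace Y] [Zero M] {ψ : X × Y → M} (hψ : HasCompactSupport ψ) (h : X → Y) :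
    HasCompactSupport fun x ↦ ψ (x, h x) :=
  HasCompactSupport.intro (hψ.image continuous_fst) fun _ hx ↦
    image_eq_zero_of_notMem_tsupport fun hmem ↦ hx ⟨_, hmem, rfl⟩

section IntegralFDeriv

variable {E F : Type*} [NormedAddCommGroup E] [NormedSpace ℝ E] [MeasurableSpace E]
  [BorelSpace E] [NormedAddCommGroup F] [NormedSpace ℝ F] (μ : Measure E)

theorem integrable_fderiv_apply [IsFiniteMeasureOnCompacts μ] {f : E → F} (hf : ContDiff ℝ 1 f)
    (hfc : HasCompactSupport f) (v : E) : Integrable (fun x ↦ fderiv ℝ f x v) μ :=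
  ((hf.continuous_fderiv one_ne_zero).clm_apply continuous_const).integrable_of_hasCompactSupport
    (hfc.fderiv_apply (𝕜 := ℝ) v)

theorem integral_fderiv_apply_eq_zero [FiniteDimensional ℝ E] [μ.IsAddHaarMeasure] {f : E → ℝ}
    (hf : ContDiff ℝ 1 f) (hfc : HasCompactSupport f) (v : E) : ∫ x, fderiv ℝ f x v ∂μ = 0 := by
  simpa using integral_mul_fderiv_eq_neg_fderiv_mul_of_integrable (f := fun _ ↦ (1 : ℝ)) (μ := μ)
    (by simp) (by simpa using integrable_fderiv_apply μ hf hfc v)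
    (by simpa using hf.continuous.integrable_of_hasCompactSupport hfc)
    (fun _ _ ↦ differentiableAt_const _) (fun x _ ↦ hf.differentiable one_ne_zero x)

end IntegralFDeriv

section Graph

variable {E G : Type*} [NormedAddCommGroup E] [NormedSpace ℝ E] [NormedAddCommGroup G]
  [NormedSpace ℝ G] {ψ : E × ℝ → G} {h : E → ℝ} {x : E}

theorem fderiv_comp_graph_apply (hψ : DifferentiableAt ℝ ψ (x, h x))
    (hh : DifferentiableAt ℝ h x) (v : E) :
    fderiv ℝ (fun y ↦ ψ (y, h y)) x v
      = fderiv ℝ ψ (x, h x) (v, 0) + fderiv ℝ h x v • fderiv ℝ ψ (x, h x) (0, 1) := by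
  have hgraph : HasFDerivAt (fun y ↦ (y, h y))
      ((ContinuousLinearMap.id ℝ E).prod (fderiv ℝ h x)) x :=
    (hasFDerivAt_id x).prodMk hh.hasFDerivAt
  have hcomp : HasFDerivAt (fun y ↦ ψ (y, h y)) _ x := hψ.hasFDerivAt.comp x hgraph
  rw [hcomp.fderiv, ← _root_.map_smul, ← map_add]
  simp

end Graph

namespace EuclideanSpace

variable {n : ℕ}

theorem sum_clm_apply_single_mul (ℓ : EuclideanSpace ℝ (Fin n) →L[ℝ] ℝ)
    (w : EuclideanSpace ℝ (Fin n)) : ∑ i, ℓ (single i 1) * w i = ℓ w := by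
  conv_rhs => rw [← (basisFun (Fin n) ℝ).sum_repr w]
  simp [mul_comm]

noncomputable def divergence (F : EuclideanSpace ℝ (Fin n) → EuclideanSpace ℝ (Fin n))
    (x : EuclideanSpace ℝ (Fin n)) : ℝ :=
  ∑ i, fderiv ℝ F x (single i 1) i

noncomputable def divergenceProd
    (ψ : EuclideanSpace ℝ (Fin n) × ℝ → EuclideanSpace ℝ (Fin n) × ℝ)
    (p : EuclideanSpace ℝ (Fin n) × ℝ) : ℝ :=
  ∑ i, (fderiv ℝ ψ p (single i 1, 0)).1 i + (fderiv ℝ ψ p (0, 1)).2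

theorem divergence_eq_sum_fderiv_coord {F : EuclideanSpace ℝ (Fin n) → EuclideanSpace ℝ (Fin n)}
    {x : EuclideanSpace ℝ (Fin n)} (hF : DifferentiableAt ℝ F x) :
    divergence F x = ∑ i, fderiv ℝ (fun y ↦ F y i) x (single i 1) := by
  refine Finset.sum_congr rfl fun i _ ↦ ?_
  change _ = fderiv ℝ (proj i ∘ F) x _
  rw [((proj i).hasFDerivAt.comp x hF.hasFDerivAt).fderiv]
  rfl

theorem divergence_smul {g : EuclideanSpace ℝ (Fin n) → ℝ}
    {U : EuclideanSpace ℝ (Fin n) → EuclideanSpace ℝ (Fin n)} {x : EuclideanSpace ℝ (Fin n)}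
    (hg : DifferentiableAt ℝ g x) (hU : DifferentiableAt ℝ U x) :
    divergence (fun y ↦ g y • U y) x = g x * divergence U x + ⟪gradient g x, U x⟫ := by
  rw [divergence, fderiv_fun_smul hg hU, divergence, inner_gradient_left,
    ← sum_clm_apply_single_mul, Finset.mul_sum, ← Finset.sum_add_distrib]
  simp

theorem divergence_fst_comp_graph
    {ψ : EuclideanSpace ℝ (Fin n) × ℝ → EuclideanSpace ℝ (Fin n) × ℝ}
    {h : EuclideanSpace ℝ (Fin n) → ℝ} {x : EuclideanSpace ℝ (Fin n)}
    (hψ : DifferentiableAt ℝ ψ (x, h x)) (hh : DifferentiableAt ℝ h x) :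
    divergence (fun y ↦ (ψ (y, h y)).1) x
      = divergenceProd ψ (x, h x) - (fderiv ℝ ψ (x, h x) (0, 1)).2
        + ⟪gradient h x, (fderiv ℝ ψ (x, h x) (0, 1)).1⟫ := by
  have hgraph : DifferentiableAt ℝ (fun y ↦ ψ (y, h y)) x :=
    hψ.comp x (differentiableAt_id.prodMk hh)
  have hfst : HasFDerivAt (fun y ↦ (ψ (y, h y)).1)
      ((ContinuousLinearMap.fst ℝ _ ℝ).comp (fderiv ℝ (fun y ↦ ψ (y, h y)) x)) x :=
    hgraph.hasFDerivAt.fst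
  simp [divergence, divergenceProd, hfst.fderiv, fderiv_comp_graph_apply hψ hh,
    Finset.sum_add_distrib, sum_clm_apply_single_mul]

theorem integrable_divergence {F : EuclideanSpace ℝ (Fin n) → EuclideanSpace ℝ (Fin n)}
    (hF : ContDiff ℝ 1 F) (hFc : HasCompactSupport F) : Integrable (divergence F) :=
  integrable_finsetSum _ fun i _ ↦
    (proj (𝕜 := ℝ) i).integrable_comp (integrable_fderiv_apply volume hF hFc _)

theorem integral_divergence_eq_zero {F : EuclideanSpace ℝ (Fin n) → EuclideanSpace ℝ (Fin n)}
    (hF : ContDiff ℝ 1 F) (hFc : HasCompactSupport F) : ∫ x, divergence F x = 0 := by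
  have hcoord (i : Fin n) : ContDiff ℝ 1 fun y ↦ F y i := (proj (𝕜 := ℝ) i).contDiff.comp hF
  have hcoordc (i : Fin n) : HasCompactSupport fun y ↦ F y i :=
    hFc.comp_left (g := fun v : EuclideanSpace ℝ (Fin n) ↦ v i) rfl
  simp_rw [divergence_eq_sum_fderiv_coord (hF.differentiable one_ne_zero _)]
  rw [integral_finsetSum _ fun i _ ↦ integrable_fderiv_apply volume (hcoord i) (hcoordc i) _]
  exact Finset.sum_eq_zero fun i _ ↦ integral_fderiv_apply_eq_zero volume (hcoord i) (hcoordc i) _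

theorem hasCompactSupport_divergenceProd
    {ψ : EuclideanSpace ℝ (Fin n) × ℝ → EuclideanSpace ℝ (Fin n) × ℝ}
    (hψc : HasCompactSupport ψ) : HasCompactSupport (divergenceProd ψ) := by
  refine (hψc.fderiv (𝕜 := ℝ)).mono fun p hp ↦ ?_
  contrapose! hp
  simp only [Function.notMem_support] at hp ⊢
  simp [EuclideanSpace.divergenceProd, hp]

theorem integrable_divergenceProd_comp_graph_mul
    {ψ : EuclideanSpace ℝ (Fin n) × ℝ → EuclideanSpace ℝ (Fin n) × ℝ}
    {h g : EuclideanSpace ℝ (Fin n) → ℝ} (hψ : ContDiff ℝ 1 ψ) (hψc : HasCompactSupport ψ)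
    (hh : Continuous h) (hg : Continuous g) :
    Integrable fun x ↦ divergenceProd ψ (x, h x) * g x := by
  have hDψ : Continuous (fderiv ℝ ψ) := hψ.continuous_fderiv one_ne_zero
  have hcont : Continuous (divergenceProd ψ) := by
    unfold EuclideanSpace.divergenceProd
    fun_prop
  exact (by fun_prop : Continuous _).integrable_of_hasCompactSupport
    (((hasCompactSupport_divergenceProd hψc).comp_graph h).mul_right (f' := g))

end EuclideanSpace

open EuclideanSpace

theorem stmt_7_general (n : ℕ)
    (h : EuclideanSpace ℝ (Fin n) → ℝ) (hh : ContDiff ℝ 1 h)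
    (g : EuclideanSpace ℝ (Fin n) → ℝ) (hg : ContDiff ℝ 1 g)
    (ψ : EuclideanSpace ℝ (Fin n) × ℝ → EuclideanSpace ℝ (Fin n) × ℝ)
    (hψ : ContDiff ℝ 1 ψ) (hψc : HasCompactSupport ψ) :
    (∫ x, ((⟪(fderiv ℝ ψ (x, h x) ((0 : EuclideanSpace ℝ (Fin n)), (1 : ℝ))).1,
              -gradient h x⟫
            + (fderiv ℝ ψ (x, h x) ((0 : EuclideanSpace ℝ (Fin n)), (1 : ℝ))).2) * g x
          + ⟪(ψ (x, h x)).1, -gradient g x⟫))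
      = ∫ x, ((∑ i : Fin n, (fderiv ℝ ψ (x, h x) (EuclideanSpace.single i 1, (0 : ℝ))).1 i)
            + (fderiv ℝ ψ (x, h x) ((0 : EuclideanSpace ℝ (Fin n)), (1 : ℝ))).2) * g x := by
  have hU : ContDiff ℝ 1 fun x ↦ (ψ (x, h x)).1 := hψ.fst.comp (contDiff_id.prodMk hh)
  have hUc : HasCompactSupport fun x ↦ (ψ (x, h x)).1 :=
    (hψc.comp_graph h).comp_left (g := Prod.fst) Prod.fst_zero
  have hgU : ContDiff ℝ 1 fun x ↦ g x • (ψ (x, h x)).1 := hg.smul hU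
  have hgUc : HasCompactSupport fun x ↦ g x • (ψ (x, h x)).1 := hUc.smul_left (f := g)
  have hpoint (x : EuclideanSpace ℝ (Fin n)) :
      (⟪(fderiv ℝ ψ (x, h x) ((0 : EuclideanSpace ℝ (Fin n)), (1 : ℝ))).1, -gradient h x⟫
          + (fderiv ℝ ψ (x, h x) ((0 : EuclideanSpace ℝ (Fin n)), (1 : ℝ))).2) * g x
        + ⟪(ψ (x, h x)).1, -gradient g x⟫
      = divergenceProd ψ (x, h x) * g x - divergence (fun x ↦ g x • (ψ (x, h x)).1) x := by
    rw [divergence_smul (hg.differentiable one_ne_zero x) (hU.differentiable one_ne_zero x),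
      divergence_fst_comp_graph (hψ.differentiable one_ne_zero _) (hh.differentiable one_ne_zero x)]
    simp only [inner_neg_right, real_inner_comm]
    ring
  rw [integral_congr_ae (.of_forall hpoint),
    integral_sub (integrable_divergenceProd_comp_graph_mul hψ hψc hh.continuous hg.continuous)
      (integrable_divergence hgU hgUc),
    integral_divergence_eq_zero hgU hgUc, sub_zero]
  rfl

/-- **Lemma 3.17 (`lem:delalph`): integration-by-parts identity on the graph.**
For `h, g : ℝⁿ → ℝ` continuously differentiable with `g` and `∇g` bounded and
`ψ ∈ C¹_c(ℝ^{n+1}; ℝ^{n+1})`,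
`∫ [∂_yψ(x,h(x))ᵀ(−∇h(x),1) g(x) + ψ(x,h(x))ᵀ(−∇g(x),0)] dx = ∫ div(ψ)(x,h(x)) g(x) dx`.
Here `∂_y ψ(p) = Dψ(p)(0,1)` and the divergence is the sum of directional derivatives,
in the model `ℝ^{n+1} = EuclideanSpace ℝ (Fin n) × ℝ`. -/
theorem stmt_7 (n : ℕ)
    (h : EuclideanSpace ℝ (Fin n) → ℝ) (hh : ContDiff ℝ 1 h)
    (g : EuclideanSpace ℝ (Fin n) → ℝ) (hg : ContDiff ℝ 1 g)
    (hgbd : ∃ C : ℝ, ∀ x, |g x| ≤ C ∧ ‖gradient g x‖ ≤ C)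
    (ψ : EuclideanSpace ℝ (Fin n) × ℝ → EuclideanSpace ℝ (Fin n) × ℝ)
    (hψ : ContDiff ℝ 1 ψ) (hψc : HasCompactSupport ψ) :
    (∫ x, ((⟪(fderiv ℝ ψ (x, h x) ((0 : EuclideanSpace ℝ (Fin n)), (1 : ℝ))).1,
              -gradient h x⟫
            + (fderiv ℝ ψ (x, h x) ((0 : EuclideanSpace ℝ (Fin n)), (1 : ℝ))).2) * g x
          + ⟪(ψ (x, h x)).1, -gradient g x⟫))
      = ∫ x, ((∑ i : Fin n, (fderiv ℝ ψ (x, h x) (EuclideanSpace.single i 1, (0 : ℝ))).1 i)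
            + (fderiv ℝ ψ (x, h x) ((0 : EuclideanSpace ℝ (Fin n)), (1 : ℝ))).2) * g x :=
  stmt_7_general n h hh g hg ψ hψ hψc
end

section
/- Let t₀ > 0, 1 ≤ p̃ < ∞, and let v : [0, t₀] → L_{p̃}(ℝ^{n+1}) be continuous (with respect to the L_{p̃}-norm). Then for every η > 0 there exists ρ > 0 such that for every continuous function g : [0, t₀] × ℝⁿ → ℝ with sup_{(t,x)} |g(t,x)| < ρ one has sup_{t ∈ [0, t₀]} ‖ v(t)(·, · − g(t, ·)) − v(t)(·, ·) ‖_{L_{p̃}(ℝ^{n+1})} ≤ η, where v(t)(x, y − g(t,x)) denotes the composition of v(t) with the shear map (x, y) ↦ (x, y − g(t, x)). -/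
/-!
A single `f ∈ L^p` is approximated by a continuous compactly supported `φ`; since `φ` is
uniformly continuous and `φ ∘ T - φ` vanishes off a fixed compact set,
`‖f ∘ T - f‖_p ≤ ‖φ ∘ T - φ‖_p + 2 ‖f - φ‖_p` is small for every measure-preserving `T`
that moves points by less than some `δ`, and the shear by `g` with `|g| < δ` is such a map.
The same inequality with `φ` replaced by `v i` transfers the radius found at `i` to all times
near `i`, and compactness of `[0, t₀]` makes one radius work for all times.
-/

open MeasureTheory Filter Topology
open scoped ENNReal

def shear {α G : Type*} [Sub G] (h : α → G) (q : α × G) : α × G :=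
  (q.1, q.2 - h q.1)

theorem measurePreserving_shear {α G : Type*} [MeasurableSpace α] [MeasurableSpace G]
    [AddGroup G] [MeasurableAdd G] [MeasurableSub₂ G] (μ : Measure α) (ν : Measure G)
    [SFinite μ] [SFinite ν] [ν.IsAddRightInvariant] {h : α → G} (hh : Measurable h) :
    MeasurePreserving (shear h) (μ.prod ν) (μ.prod ν) :=
  (MeasurePreserving.id μ).skew_product (g := fun a y => y - h a)
    (measurable_snd.sub (hh.comp measurable_fst))
    (Eventually.of_forall fun a => (measurePreserving_sub_right ν (h a)).map_eq)

theorem dist_shear_self {α G : Type*} [PseudoMetricSpace α] [SeminormedAddCommGroup G]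
    (h : α → G) (q : α × G) : dist (shear h q) q = ‖h q.1‖ := by
  simp [shear, Prod.dist_eq]

theorem MeasureTheory.MeasurePreserving.eLpNorm_comp_sub_le {α E : Type*} [MeasurableSpace α]
    {μ : Measure α} [NormedAddCommGroup E] {p : ℝ≥0∞} (hp : 1 ≤ p) {T : α → α}
    (hT : MeasurePreserving T μ μ) {f g : α → E} (hf : AEStronglyMeasurable f μ)
    (hg : AEStronglyMeasurable g μ) :
    eLpNorm (f ∘ T - f) p μ ≤ eLpNorm (g ∘ T - g) p μ + 2 * eLpNorm (f - g) p μ := by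
  have hfgT : AEStronglyMeasurable ((f - g) ∘ T) μ :=
    (hf.sub hg).comp_quasiMeasurePreserving hT.quasiMeasurePreserving
  have hgT : AEStronglyMeasurable (g ∘ T) μ :=
    hg.comp_quasiMeasurePreserving hT.quasiMeasurePreserving
  calc eLpNorm (f ∘ T - f) p μ = eLpNorm ((f - g) ∘ T + (g ∘ T - g) + (g - f)) p μ := by
        congr 1; ext; simp only [Function.comp_apply, Pi.add_apply, Pi.sub_apply]; abel
    _ ≤ eLpNorm ((f - g) ∘ T) p μ + eLpNorm (g ∘ T - g) p μ + eLpNorm (g - f) p μ :=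
        (eLpNorm_add_le (hfgT.add (hgT.sub hg)) (hg.sub hf) hp).trans
          (by gcongr; exact eLpNorm_add_le hfgT (hgT.sub hg) hp)
    _ = eLpNorm (g ∘ T - g) p μ + 2 * eLpNorm (f - g) p μ := by
        rw [eLpNorm_comp_measurePreserving (hf.sub hg) hT, eLpNorm_sub_comm g f]; ring

theorem HasCompactSupport.exists_eLpNorm_comp_sub_le {X E : Type*} [PseudoMetricSpace X]
    [ProperSpace X] [MeasurableSpace X] (μ : Measure X) [IsFiniteMeasureOnCompacts μ]
    [NormedAddCommGroup E] {φ : X → E} (hφc : Continuous φ) (hφs : HasCompactSupport φ)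
    (p : ℝ≥0∞) {ε : ℝ≥0∞} (hε : ε ≠ 0) :
    ∃ δ > 0, ∀ T : X → X, (∀ x, dist (T x) x < δ) →
      eLpNorm (φ ∘ T - φ) p μ ≤ ε := by
  set K := Metric.cthickening 1 (tsupport φ)
  have hK : IsCompact K := hφs.isCompact.cthickening
  have hM : μ K ^ (1 / p.toReal) ≠ ∞ :=
    ENNReal.rpow_ne_top_of_nonneg (by positivity) hK.measure_lt_top.ne
  obtain ⟨c, hc0, hc⟩ := ENNReal.exists_nnreal_pos_mul_lt hM hε
  obtain ⟨δ, hδ0, hδ⟩ :=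
    Metric.uniformContinuous_iff.1 (hφs.uniformContinuous_of_continuous hφc) c hc0
  refine ⟨min δ 1, by positivity, fun T hT => ?_⟩
  have hbound : ∀ x, ‖φ (T x) - φ x‖ ≤ ‖K.indicator (fun _ => (c : ℝ)) x‖ := by
    intro x
    by_cases hx : x ∈ K
    · rw [Set.indicator_of_mem hx, ← dist_eq_norm, NNReal.norm_eq]
      exact (hδ ((hT x).trans_le (min_le_left _ _))).le
    · have hTx : T x ∉ tsupport φ := fun hTx => hx <|
        Metric.mem_cthickening_of_dist_le x (T x) 1 _ hTx
          (by rw [dist_comm]; exact (hT x).le.trans (min_le_right _ _))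
      have hx' : x ∉ tsupport φ := fun hx' => hx (Metric.self_subset_cthickening _ hx')
      simp [image_eq_zero_of_notMem_tsupport hTx, image_eq_zero_of_notMem_tsupport hx']
  calc eLpNorm (φ ∘ T - φ) p μ
      ≤ eLpNorm (K.indicator fun _ => (c : ℝ)) p μ := eLpNorm_mono hbound
    _ ≤ ‖(c : ℝ)‖ₑ * μ K ^ (1 / p.toReal) := eLpNorm_indicator_const_le _ _
    _ ≤ ε := by simpa using hc.le

theorem MeasureTheory.MemLp.exists_eLpNorm_comp_sub_le {X E : Type*} [PseudoMetricSpace X]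
    [ProperSpace X] [MeasurableSpace X] [BorelSpace X] {μ : Measure X} [μ.Regular]
    [NormedAddCommGroup E] [NormedSpace ℝ E] {p : ℝ≥0∞} (hp1 : 1 ≤ p) (hp : p ≠ ∞)
    {f : X → E} (hf : MemLp f p μ) {ε : ℝ≥0∞} (hε : ε ≠ 0) :
    ∃ δ > 0, ∀ T : X → X, MeasurePreserving T μ μ → (∀ x, dist (T x) x < δ) →
      eLpNorm (f ∘ T - f) p μ ≤ ε := by
  have hε3 : ε / 3 ≠ 0 := by simpa using hε
  obtain ⟨φ, hφs, hfφ, hφc, -⟩ := hf.exists_hasCompactSupport_eLpNorm_sub_le hp hε3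
  obtain ⟨δ, hδ, hφT⟩ := hφs.exists_eLpNorm_comp_sub_le μ hφc p hε3
  refine ⟨δ, hδ, fun T hT hTδ => ?_⟩
  calc eLpNorm (f ∘ T - f) p μ ≤ eLpNorm (φ ∘ T - φ) p μ + 2 * eLpNorm (f - φ) p μ :=
        hT.eLpNorm_comp_sub_le hp1 hf.1 hφc.aestronglyMeasurable
    _ ≤ ε / 3 + 2 * (ε / 3) := by gcongr; exact hφT T hTδ
    _ = ε := by rw [two_mul, ← add_assoc, ENNReal.add_thirds]

theorem IsCompact.exists_pos_forall {X : Type*} [TopologicalSpace X] {K : Set X}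
    (hK : IsCompact K) {P : X → ℝ → Prop} (hP : ∀ x, Antitone (P x))
    (hloc : ∀ x ∈ K, ∃ ρ > 0, ∀ᶠ y in 𝓝[K] x, P y ρ) : ∃ ρ > 0, ∀ x ∈ K, P x ρ := by
  refine hK.induction_on ⟨1, one_pos, by simp⟩
    (fun s t hst ⟨ρ, hρ, ht⟩ => ⟨ρ, hρ, fun x hx => ht x (hst hx)⟩) ?_ ?_
  · rintro s t ⟨ρ, hρ, hs⟩ ⟨ρ', hρ', ht⟩
    refine ⟨min ρ ρ', lt_min hρ hρ', fun x hx => ?_⟩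
    rcases hx with hx | hx
    · exact hP x (min_le_left _ _) (hs x hx)
    · exact hP x (min_le_right _ _) (ht x hx)
  · intro x hx
    obtain ⟨ρ, hρ, hev⟩ := hloc x hx
    exact ⟨_, hev, ρ, hρ, fun y hy => hy⟩

theorem stmt_15_general (n : ℕ) (t₀ : ℝ) (p : ℝ≥0∞) (hp1 : 1 ≤ p) (hp2 : p ≠ ⊤)
    (v : ℝ → EuclideanSpace ℝ (Fin n) × ℝ → ℝ)
    (hv_mem : ∀ t ∈ Set.Icc (0 : ℝ) t₀, MemLp (v t) p volume)
    (hv_cont : ∀ t ∈ Set.Icc (0 : ℝ) t₀, ∀ η > (0 : ℝ), ∃ ζ > (0 : ℝ),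
      ∀ s ∈ Set.Icc (0 : ℝ) t₀, |s - t| < ζ →
        eLpNorm (fun q : EuclideanSpace ℝ (Fin n) × ℝ => v s q - v t q) p volume
          ≤ ENNReal.ofReal η) :
    ∀ η > (0 : ℝ), ∃ ρ > (0 : ℝ), ∀ g : ℝ → EuclideanSpace ℝ (Fin n) → ℝ,
      Continuous (fun q : ℝ × EuclideanSpace ℝ (Fin n) => g q.1 q.2) →
      (∀ t x, |g t x| < ρ) →
      ∀ t ∈ Set.Icc (0 : ℝ) t₀,
        eLpNorm (fun q : EuclideanSpace ℝ (Fin n) × ℝ =>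
            v t (q.1, q.2 - g t q.1) - v t q) p volume
          ≤ ENNReal.ofReal η := by
  intro η hη
  have hη3 : 0 < η / 3 := by positivity
  refine (isCompact_Icc.exists_pos_forall
    (P := fun t ρ => ∀ h : EuclideanSpace ℝ (Fin n) → ℝ, Measurable h → (∀ x, |h x| < ρ) →
      eLpNorm (v t ∘ shear h - v t) p volume ≤ ENNReal.ofReal η)
    (fun t ρ' ρ hρ' H h hh hhρ => H h hh fun x => (hhρ x).trans_le hρ') ?_).imp
    fun ρ ⟨hρ, hρK⟩ => ⟨hρ, fun g hg hgρ t ht =>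
      hρK t ht (g t) (hg.comp (Continuous.prodMk_right t)).measurable (hgρ t)⟩
  intro i hi
  obtain ⟨δ, hδ, hshear⟩ := (hv_mem i hi).exists_eLpNorm_comp_sub_le hp1 hp2
    (ENNReal.ofReal_pos.2 hη3).ne'
  obtain ⟨ζ, hζ, hvi⟩ := hv_cont i hi _ hη3
  refine ⟨δ, hδ, ?_⟩
  filter_upwards [self_mem_nhdsWithin, nhdsWithin_le_nhds (Metric.ball_mem_nhds i hζ)]
    with s hs hsi h hh hhδ
  have hT : MeasurePreserving (shear h) volume volume := measurePreserving_shear volume volume hh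
  calc eLpNorm (v s ∘ shear h - v s) p volume
      ≤ eLpNorm (v i ∘ shear h - v i) p volume + 2 * eLpNorm (v s - v i) p volume :=
        hT.eLpNorm_comp_sub_le hp1 (hv_mem s hs).1 (hv_mem i hi).1
    _ ≤ ENNReal.ofReal (η / 3) + 2 * ENNReal.ofReal (η / 3) := by
        gcongr
        · exact hshear _ hT fun q => by rw [dist_shear_self]; exact hhδ q.1
        · exact hvi s hs hsi
    _ = ENNReal.ofReal η := by
        rw [← ENNReal.ofReal_ofNat 2, ← ENNReal.ofReal_mul zero_le_two,
          ← ENNReal.ofReal_add hη3.le (by positivity)]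
        congr 1
        ring

/-- **Uniform continuity of composition with small shears in `L_p̃` (property (3.20)/(3.21),
`Cshift`).** Let `v : [0,t₀] → L_{p̃}(ℝ^{n+1})` be continuous, `1 ≤ p̃ < ∞`. Then for every
`η > 0` there is `ρ > 0` such that for every continuous `g : [0,t₀] × ℝⁿ → ℝ` with
`sup |g| < ρ` one has `sup_{t∈[0,t₀]} ‖v(t)(·, · − g(t,·)) − v(t)‖_{L_{p̃}} ≤ η`. -/
theorem stmt_15 (n : ℕ) (t₀ : ℝ) (ht₀ : 0 < t₀) (p : ℝ≥0∞) (hp1 : 1 ≤ p) (hp2 : p ≠ ⊤)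
    (v : ℝ → EuclideanSpace ℝ (Fin n) × ℝ → ℝ)
    (hv_mem : ∀ t ∈ Set.Icc (0 : ℝ) t₀, MemLp (v t) p volume)
    (hv_cont : ∀ t ∈ Set.Icc (0 : ℝ) t₀, ∀ η > (0 : ℝ), ∃ ζ > (0 : ℝ),
      ∀ s ∈ Set.Icc (0 : ℝ) t₀, |s - t| < ζ →
        eLpNorm (fun q : EuclideanSpace ℝ (Fin n) × ℝ => v s q - v t q) p volume
          ≤ ENNReal.ofReal η) :
    ∀ η > (0 : ℝ), ∃ ρ > (0 : ℝ), ∀ g : ℝ → EuclideanSpace ℝ (Fin n) → ℝ,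
      Continuous (fun q : ℝ × EuclideanSpace ℝ (Fin n) => g q.1 q.2) →
      (∀ t x, |g t x| < ρ) →
      ∀ t ∈ Set.Icc (0 : ℝ) t₀,
        eLpNorm (fun q : EuclideanSpace ℝ (Fin n) × ℝ =>
            v t (q.1, q.2 - g t q.1) - v t q) p volume
          ≤ ENNReal.ofReal η :=
  stmt_15_general n t₀ p hp1 hp2 v hv_mem hv_cont
end
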